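/- arXiv:2305.11028 — 3 statements merged into one kernel-verified Lean document; each statement's English description precedes it below -/
import Mathlib

section
/- Let n ≥ 2 be an integer, a > 0, and let φ : [a,∞) → [0,∞) be a nondecreasing function satisfying the doubling condition: there exist constants γ > 0 and T ≥ a such that φ(2t) ≤ γ·φ(t) for all t ≥ T. Let x0 ∈ ℝⁿ and let Q : ℝⁿ → [0,∞] be a Lebesgue measurable function for which there exists a constant 0 < C < ∞ with limsup_{ε→0⁺} (φ(1/ε)/(Ωₙ·εⁿ)) · ∫_{B(x0,ε)} Q(x) dm(x) ≤ C. Then there exist ε0′ > 0 and ε1 ∈ (0, ε0′) such that for every ε ∈ (0, ε1) one has ∫_{{x : ε < |x−x0| < ε0′}} φ(1/|x−x0|)·Q(x)/|x−x0|ⁿ dm(x) ≤ C₁·log(1/ε), where C₁ = γ·C·Ωₙ·2ⁿ/log 2. -/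
/-!
Cut the ring `ε < |x - x₀| < R` into `⌈log_q (R / ε)⌉` shells `r / q ≤ |x - x₀| < r` of a fixed
ratio `q ∈ (1, 2]`. On a shell, monotonicity and doubling give `φ(1/|x - x₀|) ≤ γ φ(1/r)`, and
`|x - x₀|⁻ⁿ ≤ qⁿ r⁻ⁿ`; so for small `r` the shell contributes at most `γ C' qⁿ Ωₙ`, where `C' > C`
bounds the ball means eventually. Summing gives `γ C' qⁿ Ωₙ (log (1/ε) / log q + 1)`. With `q = 2`
this constant would be too large by the factor `C' / C`; but for `n ≥ 2` the map `q ↦ qⁿ / log q`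
is increasing near `2`, so some `q < 2` has `qⁿ / log q < 2ⁿ / log 2`, and this gap absorbs both
`C' - C` and the additive `1` once `ε` is small.
-/

open MeasureTheory Metric Filter Set
open scoped ENNReal NNReal Topology

theorem exists_pow_div_log_lt_two_pow_div_log {n : ℕ} (hn : 2 ≤ n) :
    ∃ q : ℝ, 1 < q ∧ q ≤ 2 ∧ q ^ n / Real.log q < 2 ^ n / Real.log 2 := by
  -- `q = μ³` with `μ⁴ = 2`, so `qⁿ / log q = (4/3) μ⁻ⁿ 2ⁿ / log 2` and `μⁿ ≥ μ² = √2 > 4/3`.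
  set μ : ℝ := 2 ^ (4⁻¹ : ℝ)
  have hμ1 : 1 < μ := Real.one_lt_rpow (by norm_num) (by norm_num)
  have hμ0 : 0 < μ := zero_lt_one.trans hμ1
  have hμ4 : μ ^ 4 = 2 := by
    rw [← Real.rpow_natCast, ← Real.rpow_mul (by norm_num)]; norm_num
  have hlogμ : 0 < Real.log μ := Real.log_pos hμ1
  have hμn : 4 / 3 < μ ^ n := by
    have hμ2 : 4 / 3 < μ ^ 2 := by nlinarith [pow_pos hμ0 2]
    exact hμ2.trans_le (pow_le_pow_right₀ hμ1.le hn)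
  refine ⟨μ ^ 3, one_lt_pow₀ hμ1 (by norm_num), ?_, ?_⟩
  · rw [← hμ4]; exact pow_le_pow_right₀ hμ1.le (by norm_num)
  · rw [← hμ4, Real.log_pow, Real.log_pow, ← pow_mul, ← pow_mul,
      div_lt_div_iff₀ (by positivity) (by positivity), show 4 * n = 3 * n + n by ring, pow_add]
    push_cast
    nlinarith [mul_lt_mul_of_pos_left hμn (mul_pos (pow_pos hμ0 (3 * n)) hlogμ)]

theorem exists_gt_and_mul_lt_mul {c p p' : ℝ} (hc : 0 < c) (hp : 0 < p) (hpp' : p < p') :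
    ∃ c', c < c' ∧ c' * p < c * p' := by
  obtain ⟨c', hcc', hc'⟩ := exists_between (lt_mul_of_one_lt_right hc ((one_lt_div hp).2 hpp'))
  exact ⟨c', hcc', by rwa [← mul_div_assoc, lt_div_iff₀ hp] at hc'⟩

theorem div_pow_natCeil_logb_le {q R ε : ℝ} (hq : 1 < q) (hR : 0 < R) (hε : 0 < ε) :
    R / q ^ ⌈Real.logb q (R / ε)⌉₊ ≤ ε := by
  rw [div_le_iff₀ (by positivity), ← div_le_iff₀' hε]
  calc R / ε = q ^ Real.logb q (R / ε) := (Real.rpow_logb (by linarith) hq.ne' (by positivity)).symm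
    _ ≤ q ^ (⌈Real.logb q (R / ε)⌉₊ : ℝ) := Real.rpow_le_rpow_of_exponent_le hq.le (Nat.le_ceil _)
    _ = q ^ ⌈Real.logb q (R / ε)⌉₊ := Real.rpow_natCast _ _

theorem div_add_one_mul_le {L ℓ A B : ℝ} (hAB : A / ℓ < B) (hL : A / (B - A / ℓ) ≤ L) :
    (L / ℓ + 1) * A ≤ B * L := by
  have hA : A ≤ (B - A / ℓ) * L := (div_le_iff₀' (sub_pos.2 hAB)).1 hL
  calc (L / ℓ + 1) * A = L * (A / ℓ) + A := by ring
    _ ≤ B * L := by nlinarith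

theorem ofReal_div_add_one_mul_le {L ℓ A B γ : ℝ} {V : ℝ≥0∞} (hV : V ≠ ∞) (hγ : 0 ≤ γ)
    (hA : 0 ≤ A) (hAB : A / ℓ < B) (hL : A / (B - A / ℓ) ≤ L) :
    ENNReal.ofReal (L / ℓ + 1) * (ENNReal.ofReal (γ * A) * V) ≤
      ENNReal.ofReal (γ * V.toReal * B * L) := by
  calc _ = ENNReal.ofReal V.toReal * ENNReal.ofReal (γ * A * (L / ℓ + 1)) := by
        rw [ENNReal.ofReal_toReal hV, ENNReal.ofReal_mul (mul_nonneg hγ hA)]; ring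
    _ = ENNReal.ofReal (V.toReal * (γ * ((L / ℓ + 1) * A))) := by
        rw [← ENNReal.ofReal_mul ENNReal.toReal_nonneg]; ring_nf
    _ ≤ _ := by
        refine ENNReal.ofReal_le_ofReal ((mul_le_mul_of_nonneg_left (mul_le_mul_of_nonneg_left
          (div_add_one_mul_le hAB hL) hγ) ENNReal.toReal_nonneg).trans_eq ?_)
        ring

theorem eventually_le_one_div (b : ℝ) : ∀ᶠ r in 𝓝[>] (0 : ℝ), b ≤ 1 / r := by
  simpa only [one_div] using tendsto_inv_nhdsGT_zero.eventually_ge_atTop b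

theorem eventually_le_log_one_div (b : ℝ) : ∀ᶠ r in 𝓝[>] (0 : ℝ), b ≤ Real.log (1 / r) := by
  simpa only [one_div, Function.comp_def] using
    (Real.tendsto_log_atTop.comp tendsto_inv_nhdsGT_zero).eventually_ge_atTop b

theorem le_mul_of_doubling {φ : ℝ → ℝ} {a T γ s t : ℝ}
    (hφ_mono : ∀ s t, a ≤ s → s ≤ t → φ s ≤ φ t)
    (hdoubling : ∀ t, T ≤ t → φ (2 * t) ≤ γ * φ t)
    (ha : a ≤ t) (hT : T ≤ t) (hts : t ≤ s) (hst : s ≤ 2 * t) : φ s ≤ γ * φ t :=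
  (hφ_mono s (2 * t) (ha.trans hts) hst).trans (hdoubling t hT)

theorem setLIntegral_ball_diff_ball_le {X : Type*} [PseudoMetricSpace X] [MeasurableSpace X]
    [OpensMeasurableSpace X] (μ : Measure X) (x0 : X) (Q : X → ℝ≥0∞) (n : ℕ)
    {φ : ℝ → ℝ} {a T γ q r : ℝ}
    (hφ_mono : ∀ s t, a ≤ s → s ≤ t → φ s ≤ φ t)
    (hdoubling : ∀ t, T ≤ t → φ (2 * t) ≤ γ * φ t) (hγ : 0 ≤ γ)
    (hq : 0 < q) (hq2 : q ≤ 2) (hr : 0 < r) (ha : a ≤ 1 / r) (hT : T ≤ 1 / r) :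
    ∫⁻ x in ball x0 r \ ball x0 (r / q),
        ENNReal.ofReal (φ (1 / dist x x0)) * Q x / ENNReal.ofReal (dist x x0 ^ n) ∂μ ≤
      ENNReal.ofReal (γ * q ^ n / r ^ n) *
        (ENNReal.ofReal (φ (1 / r)) * ∫⁻ x in ball x0 r, Q x ∂μ) := by
  have hpoint : ∀ x ∈ ball x0 r \ ball x0 (r / q),
      ENNReal.ofReal (φ (1 / dist x x0)) * Q x / ENNReal.ofReal (dist x x0 ^ n) ≤
        ENNReal.ofReal (γ * q ^ n / r ^ n) * ENNReal.ofReal (φ (1 / r)) * Q x := by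
    rintro x ⟨hxr, hxs⟩
    rw [mem_ball] at hxr
    rw [mem_ball, not_lt] at hxs
    have hd : 0 < dist x x0 := (div_pos hr hq).trans_le hxs
    have hinv : 1 / dist x x0 ≤ q / r := by
      simpa only [one_div_div] using one_div_le_one_div_of_le (div_pos hr hq) hxs
    have hφ : φ (1 / dist x x0) ≤ γ * φ (1 / r) :=
      le_mul_of_doubling hφ_mono hdoubling ha hT (one_div_le_one_div_of_le hd hxr.le)
        (hinv.trans (by rw [mul_one_div]; gcongr))
    have hpow : (ENNReal.ofReal (dist x x0 ^ n))⁻¹ ≤ ENNReal.ofReal (q ^ n / r ^ n) := by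
      rw [← ENNReal.ofReal_inv_of_pos (by positivity), ← div_pow, ← one_div, ← one_div_pow]
      exact ENNReal.ofReal_le_ofReal (pow_le_pow_left₀ (by positivity) hinv n)
    calc ENNReal.ofReal (φ (1 / dist x x0)) * Q x / ENNReal.ofReal (dist x x0 ^ n)
        = ENNReal.ofReal (φ (1 / dist x x0)) * (ENNReal.ofReal (dist x x0 ^ n))⁻¹ * Q x := by
          rw [div_eq_mul_inv, mul_right_comm]
      _ ≤ ENNReal.ofReal (γ * φ (1 / r)) * ENNReal.ofReal (q ^ n / r ^ n) * Q x := by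
          gcongr
      _ = ENNReal.ofReal (γ * q ^ n / r ^ n) * ENNReal.ofReal (φ (1 / r)) * Q x := by
          rw [ENNReal.ofReal_mul hγ, mul_div_assoc, ENNReal.ofReal_mul hγ]; ring
  calc _ ≤ ∫⁻ x in ball x0 r \ ball x0 (r / q),
        ENNReal.ofReal (γ * q ^ n / r ^ n) * ENNReal.ofReal (φ (1 / r)) * Q x ∂μ :=
        setLIntegral_mono' (measurableSet_ball.diff measurableSet_ball) hpoint
    _ ≤ ENNReal.ofReal (γ * q ^ n / r ^ n) * ENNReal.ofReal (φ (1 / r)) *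
        ∫⁻ x in ball x0 r, Q x ∂μ := by
        rw [lintegral_const_mul' _ _ (by finiteness)]
        gcongr
        exact sdiff_subset
    _ = _ := mul_assoc _ _ _

theorem setLIntegral_ball_diff_ball_div_pow_le {X : Type*} [PseudoMetricSpace X]
    [MeasurableSpace X] (μ : Measure X) (x0 : X) (f : X → ℝ≥0∞) {q R : ℝ} {B : ℝ≥0∞}
    (hq : 1 ≤ q) (hR : 0 < R)
    (hring : ∀ r, 0 < r → r ≤ R → ∫⁻ x in ball x0 r \ ball x0 (r / q), f x ∂μ ≤ B) (K : ℕ) :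
    ∫⁻ x in ball x0 R \ ball x0 (R / q ^ K), f x ∂μ ≤ K * B := by
  induction K with
  | zero => simp
  | succ K ih =>
    have hcover : ball x0 R \ ball x0 (R / q ^ (K + 1)) ⊆
        (ball x0 (R / q ^ K) \ ball x0 (R / q ^ K / q)) ∪ (ball x0 R \ ball x0 (R / q ^ K)) := by
      rw [div_div, ← pow_succ]
      rintro x ⟨hxR, hxK⟩
      by_cases hx : x ∈ ball x0 (R / q ^ K)
      · exact Or.inl ⟨hx, hxK⟩
      · exact Or.inr ⟨hxR, hx⟩
    calc _ ≤ ∫⁻ x in (ball x0 (R / q ^ K) \ ball x0 (R / q ^ K / q)) ∪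
            (ball x0 R \ ball x0 (R / q ^ K)), f x ∂μ := lintegral_mono_set hcover
      _ ≤ B + K * B := (lintegral_union_le _ _ _).trans <| add_le_add
          (hring _ (by positivity) (div_le_self hR.le (one_le_pow₀ hq))) ih
      _ = (K + 1 : ℕ) * B := by push_cast; ring

theorem setLIntegral_dist_mem_Ioo_le {X : Type*} [PseudoMetricSpace X] [MeasurableSpace X]
    (μ : Measure X) (x0 : X) (f : X → ℝ≥0∞) {q R ε : ℝ} {B : ℝ≥0∞}
    (hq : 1 < q) (hε : 0 < ε) (hεR : ε < R) (hR1 : R ≤ 1)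
    (hring : ∀ r, 0 < r → r ≤ R → ∫⁻ x in ball x0 r \ ball x0 (r / q), f x ∂μ ≤ B) :
    ∫⁻ x in {x | ε < dist x x0 ∧ dist x x0 < R}, f x ∂μ ≤
      ENNReal.ofReal (Real.log (1 / ε) / Real.log q + 1) * B := by
  have hR : 0 < R := hε.trans hεR
  set K := ⌈Real.logb q (R / ε)⌉₊
  have hK : (K : ℝ) ≤ Real.log (1 / ε) / Real.log q + 1 :=
    calc (K : ℝ) ≤ Real.logb q (R / ε) + 1 :=
          (Nat.ceil_lt_add_one (Real.logb_nonneg hq ((one_le_div hε).2 hεR.le))).le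
      _ ≤ Real.logb q (1 / ε) + 1 := by gcongr
  calc _ ≤ ∫⁻ x in ball x0 R \ ball x0 (R / q ^ K), f x ∂μ :=
        lintegral_mono_set fun x hx =>
          ⟨hx.2, not_lt.2 ((div_pow_natCeil_logb_le hq hR hε).trans hx.1.le)⟩
    _ ≤ K * B := setLIntegral_ball_diff_ball_div_pow_le μ x0 f hq.le hR hring K
    _ ≤ _ := by
        rw [← ENNReal.ofReal_natCast]
        gcongr

theorem eventually_setLIntegral_ball_diff_ball_le {X : Type*} [PseudoMetricSpace X]
    [MeasurableSpace X] [OpensMeasurableSpace X] (μ : Measure X) (x0 : X) (Q : X → ℝ≥0∞)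
    (n : ℕ) {φ : ℝ → ℝ} {a T γ q c : ℝ} {V : ℝ≥0∞}
    (hφ_mono : ∀ s t, a ≤ s → s ≤ t → φ s ≤ φ t)
    (hdoubling : ∀ t, T ≤ t → φ (2 * t) ≤ γ * φ t) (hγ : 0 ≤ γ)
    (hq : 0 < q) (hq2 : q ≤ 2) (hV : V ≠ 0) (hV' : V ≠ ∞)
    (hlimsup : limsup (fun r : ℝ => ENNReal.ofReal (φ (1 / r)) / (V * ENNReal.ofReal (r ^ n)) *
        ∫⁻ x in ball x0 r, Q x ∂μ) (𝓝[>] 0) < ENNReal.ofReal c) :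
    ∀ᶠ r in 𝓝[>] (0 : ℝ), ∫⁻ x in ball x0 r \ ball x0 (r / q),
        ENNReal.ofReal (φ (1 / dist x x0)) * Q x / ENNReal.ofReal (dist x x0 ^ n) ∂μ ≤
      ENNReal.ofReal (γ * (c * q ^ n)) * V := by
  filter_upwards [eventually_lt_of_limsup_lt hlimsup, eventually_le_one_div a,
    eventually_le_one_div T, self_mem_nhdsWithin] with r hmean ha hT hr0
  have hr : 0 < r := hr0
  have hball : ENNReal.ofReal (φ (1 / r)) * ∫⁻ x in ball x0 r, Q x ∂μ ≤
      ENNReal.ofReal c * (V * ENNReal.ofReal (r ^ n)) := by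
    rw [div_eq_mul_inv, mul_right_comm, ← div_eq_mul_inv,
      ENNReal.div_lt_iff (.inl (mul_ne_zero hV (ENNReal.ofReal_pos.2 (pow_pos hr n)).ne'))
        (.inl (ENNReal.mul_ne_top hV' ENNReal.ofReal_ne_top))] at hmean
    exact hmean.le
  calc _ ≤ _ := setLIntegral_ball_diff_ball_le μ x0 Q n hφ_mono hdoubling hγ hq hq2 hr ha hT
    _ ≤ ENNReal.ofReal (γ * q ^ n / r ^ n) * (ENNReal.ofReal c * (V * ENNReal.ofReal (r ^ n))) := by
        gcongr
    _ = ENNReal.ofReal (γ * q ^ n / r ^ n * r ^ n) * ENNReal.ofReal c * V := by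
        rw [ENNReal.ofReal_mul (by positivity)]; ring
    _ = _ := by
        rw [div_mul_cancel₀ _ (by positivity), ← ENNReal.ofReal_mul (by positivity)]
        ring_nf

theorem averages_over_rings_estimate_general
    (n : ℕ) (hn : 2 ≤ n) (a : ℝ)
    (φ : ℝ → ℝ)
    (hφ_mono : ∀ s t, a ≤ s → s ≤ t → φ s ≤ φ t)
    (γ T : ℝ) (hγ : 0 < γ)
    (hdoubling : ∀ t, T ≤ t → φ (2 * t) ≤ γ * φ t)
    (x0 : EuclideanSpace ℝ (Fin n))
    (Q : EuclideanSpace ℝ (Fin n) → ℝ≥0∞)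
    (C : ℝ) (hC : 0 < C)
    (hlimsup :
      Filter.limsup
        (fun ε : ℝ =>
          ENNReal.ofReal (φ (1 / ε)) /
              (volume (ball (0 : EuclideanSpace ℝ (Fin n)) 1) * ENNReal.ofReal (ε ^ n)) *
            ∫⁻ x in ball x0 ε, Q x)
        (nhdsWithin (0 : ℝ) (Set.Ioi 0)) ≤ ENNReal.ofReal C) :
    ∃ ε0' > (0 : ℝ), ∃ ε1 ∈ Set.Ioo (0 : ℝ) ε0', ∀ ε ∈ Set.Ioo (0 : ℝ) ε1,
      ∫⁻ x in {x : EuclideanSpace ℝ (Fin n) | ε < dist x x0 ∧ dist x x0 < ε0'},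
          ENNReal.ofReal (φ (1 / dist x x0)) * Q x / ENNReal.ofReal ((dist x x0) ^ n) ≤
        ENNReal.ofReal
          (γ * C * (volume (ball (0 : EuclideanSpace ℝ (Fin n)) 1)).toReal * 2 ^ n /
              Real.log 2 * Real.log (1 / ε)) := by
  obtain ⟨q, hq1, hq2, hq⟩ := exists_pow_div_log_lt_two_pow_div_log hn
  have hlogq : 0 < Real.log q := Real.log_pos hq1
  obtain ⟨C', hCC', hC'⟩ := exists_gt_and_mul_lt_mul hC (by positivity) hq
  have hC'0 : 0 < C' := hC.trans hCC'
  obtain ⟨R, hR, hRsmall⟩ := mem_nhdsGT_iff_exists_Ioc_subset.1 <|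
    (eventually_setLIntegral_ball_diff_ball_le volume x0 Q n hφ_mono hdoubling hγ.le
      (by linarith) hq2 (measure_ball_pos volume 0 one_pos).ne' measure_ball_lt_top.ne
      (hlimsup.trans_lt ((ENNReal.ofReal_lt_ofReal_iff hC'0).2 hCC'))).and
    (eventually_nhdsWithin_of_eventually_nhds (eventually_lt_nhds one_pos))
  obtain ⟨ε1, hε1, hε1small⟩ := mem_nhdsGT_iff_exists_Ioc_subset.1 <|
    (eventually_nhdsWithin_of_eventually_nhds (eventually_lt_nhds hR)).and
      (eventually_le_log_one_div
        (C' * q ^ n / (C * (2 ^ n / Real.log 2) - C' * q ^ n / Real.log q)))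
  refine ⟨R, hR, ε1, ⟨hε1, (hε1small ⟨hε1, le_rfl⟩).1⟩, fun ε hε => ?_⟩
  obtain ⟨hεR, hL⟩ := hε1small ⟨hε.1, hε.2.le⟩
  calc _ ≤ ENNReal.ofReal (Real.log (1 / ε) / Real.log q + 1) *
        (ENNReal.ofReal (γ * (C' * q ^ n)) * volume (ball 0 1)) :=
        setLIntegral_dist_mem_Ioo_le volume x0 _ hq1 hε.1 hεR (hRsmall ⟨hR, le_rfl⟩).2.le
          fun r hr hrR => (hRsmall ⟨hr, hrR⟩).1
    _ ≤ _ := (ofReal_div_add_one_mul_le measure_ball_lt_top.ne hγ.le (by positivity)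
          (by rwa [mul_div_assoc]) hL).trans_eq (by ring_nf)

/-- Proposition 3.1 (quoted from [RSS]): if `φ` is a nondecreasing nonnegative function
on `[a, ∞)` with the doubling condition and the integral means of `Q` over balls
`B(x₀, ε)` weighted by `φ(1/ε)` are bounded by `C`, then
`∫_{ε<|x-x₀|<ε₀'} φ(1/|x-x₀|) Q(x)/|x-x₀|ⁿ dm(x) ≤ C₁ log(1/ε)` for all small `ε`,
with `C₁ = γ C Ωₙ 2ⁿ / log 2`. -/
theorem averages_over_rings_estimate
    (n : ℕ) (hn : 2 ≤ n) (a : ℝ) (ha : 0 < a)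
    (φ : ℝ → ℝ)
    (hφ_nonneg : ∀ t, a ≤ t → 0 ≤ φ t)
    (hφ_mono : ∀ s t, a ≤ s → s ≤ t → φ s ≤ φ t)
    (γ T : ℝ) (hγ : 0 < γ) (hT : a ≤ T)
    (hdoubling : ∀ t, T ≤ t → φ (2 * t) ≤ γ * φ t)
    (x0 : EuclideanSpace ℝ (Fin n))
    (Q : EuclideanSpace ℝ (Fin n) → ℝ≥0∞) (hQ : Measurable Q)
    (C : ℝ) (hC : 0 < C)
    (hlimsup :
      Filter.limsup
        (fun ε : ℝ =>
          ENNReal.ofReal (φ (1 / ε)) /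
              (volume (ball (0 : EuclideanSpace ℝ (Fin n)) 1) * ENNReal.ofReal (ε ^ n)) *
            ∫⁻ x in ball x0 ε, Q x)
        (nhdsWithin (0 : ℝ) (Set.Ioi 0)) ≤ ENNReal.ofReal C) :
    ∃ ε0' > (0 : ℝ), ∃ ε1 ∈ Set.Ioo (0 : ℝ) ε0', ∀ ε ∈ Set.Ioo (0 : ℝ) ε1,
      ∫⁻ x in {x : EuclideanSpace ℝ (Fin n) | ε < dist x x0 ∧ dist x x0 < ε0'},
          ENNReal.ofReal (φ (1 / dist x x0)) * Q x / ENNReal.ofReal ((dist x x0) ^ n) ≤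
        ENNReal.ofReal
          (γ * C * (volume (ball (0 : EuclideanSpace ℝ (Fin n)) 1)).toReal * 2 ^ n /
              Real.log 2 * Real.log (1 / ε)) :=
  averages_over_rings_estimate_general n hn a φ hφ_mono γ T hγ hdoubling x0 Q C hC hlimsup
end

section
/- Let n ≥ 2 be an integer, let D ⊆ ℝⁿ be a domain (nonempty open connected set), let x0 ∈ ∂D, and let Q : ℝⁿ → [0,∞] be a Lebesgue measurable function with Q(x) = 0 for x ∉ D, such that for some constant 0 < C < ∞ one has limsup_{ε→0⁺} (1/(Ωₙ·εⁿ)) · ∫_{B(x0,ε)∩D} Q(x) dm(x) ≤ C. Then there exist ε0′ > 0 and ε1 ∈ (0, ε0′) such that for every ε ∈ (0, ε1) one has ∫_{{x : ε < |x−x0| < ε0′}} Q(x)/|x−x0|ⁿ dm(x) ≤ (C·Ωₙ·2ⁿ/log 2)·log(1/ε). -/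
/-!
The limsup bound gives `∫_{B(x₀,r)} Q ≤ 2CΩₙ rⁿ` for all small `r`; the part of the ball
outside `D` contributes nothing since `Q` vanishes there. By the layer-cake formula, the integral
of `Q/|x-x₀|ⁿ` over the ring `ε < |x-x₀| < R` is `∫₀^∞ F(t) dt`, where `F(t)` is the `Q dm`-mass
of the part of the ring on which `|x-x₀|⁻ⁿ > t`. That part lies in the ball of radius
`t^(-1/n)`, so `F(t) ≤ 2CΩₙ min(Rⁿ, 1/t)`, and it is empty for `t > ε⁻ⁿ`. Integrating gives
`2CΩₙ (1 + n log(R/ε))`, which is below `(CΩₙ2ⁿ/log 2) log(1/ε)` as soon as `R ≤ 1` and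
`log(1/ε) ≥ 2`.
-/

open MeasureTheory Metric Filter Set
open scoped ENNReal Topology

lemma setLIntegral_inter_eq_of_support_subset {X : Type*} [MeasurableSpace X] {μ : Measure X}
    {Q : X → ℝ≥0∞} {s D : Set X} (hs : MeasurableSet s) (hQ : Q.support ⊆ D) :
    ∫⁻ x in s ∩ D, Q x ∂μ = ∫⁻ x in s, Q x ∂μ := by
  rw [inter_comm, ← Measure.restrict_restrict' hs, setLIntegral_eq_of_support_subset hQ]

lemma exists_le_mul_pow_of_limsup_lt {I : ℝ → ℝ≥0∞} {V c : ℝ≥0∞} {n : ℕ} (hc : c ≠ ∞)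
    (h : limsup (fun ε : ℝ => 1 / (V * ENNReal.ofReal (ε ^ n)) * I ε) (𝓝[>] 0) < c) :
    ∃ δ > 0, ∀ r ∈ Ioo 0 δ, I r ≤ c * (V * ENNReal.ofReal (r ^ n)) := by
  obtain ⟨δ, hδ, hlt⟩ := (nhdsGT_basis (0 : ℝ)).eventually_iff.1 (eventually_lt_of_limsup_lt h)
  refine ⟨δ, hδ, fun r hr => ?_⟩
  have hIr := hlt hr
  rw [one_div, ← ENNReal.div_eq_inv_mul] at hIr
  exact (ENNReal.div_le_iff_le_mul (Or.inr hc) (Or.inr (ne_bot_of_gt hIr))).1 hIr.le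

lemma lintegral_Ioc_ofReal_inv {a b : ℝ} (ha : 0 < a) (hab : a ≤ b) :
    ∫⁻ t in Ioc a b, ENNReal.ofReal t⁻¹ = ENNReal.ofReal (Real.log (b / a)) := by
  have hint : IntegrableOn (fun t : ℝ => t⁻¹) (Ioc a b) := by
    rw [← intervalIntegrable_iff_integrableOn_Ioc_of_le hab]
    refine intervalIntegral.intervalIntegrable_inv (fun t ht => ?_) continuousOn_id
    rw [uIcc_of_le hab] at ht
    exact (ha.trans_le ht.1).ne'
  rw [← ofReal_integral_eq_lintegral_ofReal hint, ← intervalIntegral.integral_of_le hab,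
    integral_inv_of_pos ha (ha.trans_le hab)]
  filter_upwards [self_mem_ae_restrict measurableSet_Ioc] with t ht
  exact inv_nonneg.2 (ha.trans ht.1).le

section Annulus

variable {X : Type*} [PseudoMetricSpace X]

def annulus (x0 : X) (r R : ℝ) : Set X := {x | r < dist x x0 ∧ dist x x0 < R}

lemma annulus_subset_ball (x0 : X) (r R : ℝ) : annulus x0 r R ⊆ ball x0 R :=
  fun _ hx => hx.2

lemma setOf_lt_inv_dist_pow_subset_ball (x0 : X) {n : ℕ} (hn : n ≠ 0) {t : ℝ} (ht : 0 < t) :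
    {x | t < (dist x x0 ^ n)⁻¹} ⊆ ball x0 (t⁻¹ ^ (n⁻¹ : ℝ)) := by
  intro x hx
  have hd : 0 < dist x x0 ^ n := by
    by_contra! hd
    exact (ht.trans hx).not_ge (inv_nonpos.2 hd)
  rw [mem_ball, Real.lt_rpow_inv_iff_of_pos dist_nonneg (inv_nonneg.2 ht.le)
    (Nat.cast_pos.2 (Nat.pos_of_ne_zero hn)), Real.rpow_natCast]
  exact (lt_inv_comm₀ ht hd).1 hx

variable [MeasurableSpace X] {μ : Measure X} {Q : X → ℝ≥0∞} {x0 : X} {n : ℕ}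

lemma lintegral_superlevel_inv_dist_pow_le (hn : n ≠ 0) {K : ℝ≥0∞} {R t : ℝ}
    (hball : ∀ r ∈ Ioc 0 R, ∫⁻ x in ball x0 r, Q x ∂μ ≤ K * ENNReal.ofReal (r ^ n))
    (hR : 0 < R) (ht : 0 < t) (hRt : (R ^ n)⁻¹ ≤ t) :
    ∫⁻ x in {x | t < (dist x x0 ^ n)⁻¹}, Q x ∂μ ≤ K * ENNReal.ofReal t⁻¹ := by
  have hr : t⁻¹ ^ (n⁻¹ : ℝ) ∈ Ioc 0 R := by
    refine ⟨Real.rpow_pos_of_pos (inv_pos.2 ht) _, ?_⟩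
    rw [Real.rpow_inv_le_iff_of_pos (inv_nonneg.2 ht.le) hR.le
      (Nat.cast_pos.2 (Nat.pos_of_ne_zero hn)), Real.rpow_natCast]
    exact inv_le_of_inv_le₀ (pow_pos hR n) hRt
  calc _ ≤ ∫⁻ x in ball x0 (t⁻¹ ^ (n⁻¹ : ℝ)), Q x ∂μ :=
        lintegral_mono_set (setOf_lt_inv_dist_pow_subset_ball x0 hn ht)
    _ ≤ _ := hball _ hr
    _ = K * ENNReal.ofReal t⁻¹ := by rw [Real.rpow_inv_natCast_pow (inv_nonneg.2 ht.le) hn]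

variable [OpensMeasurableSpace X]

lemma measurableSet_annulus (x0 : X) (r R : ℝ) : MeasurableSet (annulus x0 r R) :=
  (continuous_id.dist continuous_const).measurable measurableSet_Ioo

lemma lintegral_annulus_div_dist_pow_eq (hQ : Measurable Q) {r R : ℝ} (hr : 0 ≤ r) :
    ∫⁻ x in annulus x0 r R, Q x / ENNReal.ofReal (dist x x0 ^ n) ∂μ =
      ∫⁻ t in Ioi 0, ∫⁻ x in {x | t < (dist x x0 ^ n)⁻¹} ∩ annulus x0 r R, Q x ∂μ := by
  have hf : Measurable fun x => (dist x x0 ^ n)⁻¹ :=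
    ((continuous_id.dist continuous_const).measurable.pow_const n).inv
  calc _ = ∫⁻ x, ENNReal.ofReal (dist x x0 ^ n)⁻¹
        ∂(μ.restrict (annulus x0 r R)).withDensity Q := by
        rw [lintegral_withDensity_eq_lintegral_mul _ hQ hf.ennreal_ofReal]
        refine setLIntegral_congr_fun (measurableSet_annulus x0 r R) fun x hx => ?_
        rw [Pi.mul_apply, ENNReal.ofReal_inv_of_pos (pow_pos (hr.trans_lt hx.1) n),
          div_eq_mul_inv]
    _ = _ := by
        rw [lintegral_eq_lintegral_meas_lt _ (.of_forall fun x => by positivity) hf.aemeasurable]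
        congr! 2 with t
        have hm : MeasurableSet {x | t < (dist x x0 ^ n)⁻¹} := hf measurableSet_Ioi
        rw [withDensity_apply _ hm, Measure.restrict_restrict hm]

lemma lintegral_annulus_div_dist_pow_le (hQ : Measurable Q) (hn : n ≠ 0) {K : ℝ≥0∞} {ε R : ℝ}
    (hε : 0 < ε) (hεR : ε ≤ R)
    (hball : ∀ r ∈ Ioc 0 R, ∫⁻ x in ball x0 r, Q x ∂μ ≤ K * ENNReal.ofReal (r ^ n)) :
    ∫⁻ x in annulus x0 ε R, Q x / ENNReal.ofReal (dist x x0 ^ n) ∂μ ≤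
      K * ENNReal.ofReal (1 + n * Real.log (R / ε)) := by
  set F : ℝ → ℝ≥0∞ := fun t => ∫⁻ x in {x | t < (dist x x0 ^ n)⁻¹} ∩ annulus x0 ε R, Q x ∂μ
  have hR : 0 < R := hε.trans_le hεR
  have ha : 0 < (R ^ n)⁻¹ := by positivity
  have hab : (R ^ n)⁻¹ ≤ (ε ^ n)⁻¹ := inv_anti₀ (by positivity) (pow_le_pow_left₀ hε.le hεR n)
  have hlog : 0 ≤ n * Real.log (R / ε) :=
    mul_nonneg n.cast_nonneg (Real.log_nonneg ((one_le_div hε).2 hεR))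
  have hsmall : ∀ t, F t ≤ K * ENNReal.ofReal (R ^ n) := fun t =>
    (lintegral_mono_set (inter_subset_right.trans (annulus_subset_ball x0 ε R))).trans
      (hball R ⟨hR, le_rfl⟩)
  have hmid : ∀ t ∈ Ioc (R ^ n)⁻¹ (ε ^ n)⁻¹, F t ≤ K * ENNReal.ofReal t⁻¹ := fun t ht =>
    (lintegral_mono_set inter_subset_left).trans
      (lintegral_superlevel_inv_dist_pow_le hn hball hR (ha.trans ht.1) ht.1.le)
  have hlarge : ∀ t ∈ Ioi (ε ^ n)⁻¹, F t = 0 := by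
    intro t ht
    have : {x | t < (dist x x0 ^ n)⁻¹} ∩ annulus x0 ε R = ∅ :=
      eq_empty_of_forall_notMem fun x ⟨hx, hxA⟩ => (ht.trans hx).not_ge
        (inv_anti₀ (pow_pos hε n) (pow_le_pow_left₀ hε.le hxA.1.le n))
    simp [F, this]
  rw [lintegral_annulus_div_dist_pow_eq hQ hε.le, ← Ioc_union_Ioi_eq_Ioi ha.le,
    lintegral_union measurableSet_Ioi (Ioc_disjoint_Ioi le_rfl), ← Ioc_union_Ioi_eq_Ioi hab,
    lintegral_union measurableSet_Ioi (Ioc_disjoint_Ioi le_rfl),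
    setLIntegral_congr_fun measurableSet_Ioi hlarge, lintegral_zero, add_zero,
    ENNReal.ofReal_add zero_le_one hlog, mul_add, ENNReal.ofReal_one, mul_one]
  gcongr
  · calc ∫⁻ t in Ioc 0 (R ^ n)⁻¹, F t ≤ ∫⁻ t in Ioc 0 (R ^ n)⁻¹, K * ENNReal.ofReal (R ^ n) :=
          setLIntegral_mono' measurableSet_Ioc fun t _ => hsmall t
      _ = K := by
          rw [setLIntegral_const, Real.volume_Ioc, sub_zero, mul_assoc,
            ← ENNReal.ofReal_mul (by positivity), mul_inv_cancel₀ (by positivity),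
            ENNReal.ofReal_one, mul_one]
  · calc ∫⁻ t in Ioc (R ^ n)⁻¹ (ε ^ n)⁻¹, F t
          ≤ ∫⁻ t in Ioc (R ^ n)⁻¹ (ε ^ n)⁻¹, K * ENNReal.ofReal t⁻¹ :=
          setLIntegral_mono' measurableSet_Ioc hmid
      _ = K * ENNReal.ofReal (n * Real.log (R / ε)) := by
          rw [lintegral_const_mul K (by fun_prop), lintegral_Ioc_ofReal_inv ha hab, inv_div_inv,
            ← div_pow, Real.log_pow]

end Annulus

lemma two_mul_one_add_mul_le {n : ℕ} (hn : 2 ≤ n) {L : ℝ} (hL : 2 ≤ L) :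
    2 * (1 + n * L) ≤ 2 ^ n / Real.log 2 * L := by
  have hpow : (2 * n : ℝ) ≤ 2 ^ n := by
    exact_mod_cast Nat.mul_le_pow (by norm_num) n
  have hlog : (2 * n + 1) * Real.log 2 ≤ 2 ^ n := by
    have hn' : (2 : ℝ) ≤ n := by exact_mod_cast hn
    nlinarith [Real.log_two_lt_d9]
  rw [div_mul_eq_mul_div, le_div_iff₀ (Real.log_pos one_lt_two)]
  nlinarith [Real.log_pos one_lt_two]

theorem averages_over_rings_estimate_of_domain_general
    (n : ℕ) (hn : 2 ≤ n)
    (D : Set (EuclideanSpace ℝ (Fin n)))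
    (x0 : EuclideanSpace ℝ (Fin n))
    (Q : EuclideanSpace ℝ (Fin n) → ℝ≥0∞) (hQ : Measurable Q)
    (hQ_zero : ∀ x ∉ D, Q x = 0)
    (C : ℝ) (hC : 0 < C)
    (hlimsup :
      Filter.limsup
        (fun ε : ℝ =>
          (1 : ℝ≥0∞) /
              (volume (ball (0 : EuclideanSpace ℝ (Fin n)) 1) * ENNReal.ofReal (ε ^ n)) *
            ∫⁻ x in ball x0 ε ∩ D, Q x)
        (nhdsWithin (0 : ℝ) (Set.Ioi 0)) ≤ ENNReal.ofReal C) :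
    ∃ ε0' > (0 : ℝ), ∃ ε1 ∈ Set.Ioo (0 : ℝ) ε0', ∀ ε ∈ Set.Ioo (0 : ℝ) ε1,
      ∫⁻ x in {x : EuclideanSpace ℝ (Fin n) | ε < dist x x0 ∧ dist x x0 < ε0'},
          Q x / ENNReal.ofReal ((dist x x0) ^ n) ≤
        ENNReal.ofReal
          (C * (volume (ball (0 : EuclideanSpace ℝ (Fin n)) 1)).toReal * 2 ^ n /
              Real.log 2 * Real.log (1 / ε)) := by
  set Ω := volume (ball (0 : EuclideanSpace ℝ (Fin n)) 1)
  obtain ⟨δ, hδ, hball⟩ := exists_le_mul_pow_of_limsup_lt ENNReal.ofReal_ne_top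
    (hlimsup.trans_lt ((ENNReal.ofReal_lt_ofReal_iff (by positivity)).2 (by linarith : C < 2 * C)))
  obtain ⟨R, hR, hRδ1⟩ := exists_between (lt_min hδ one_pos)
  obtain ⟨ε1, hε1, hε1R⟩ := exists_between (lt_min hR (Real.exp_pos (-2)))
  refine ⟨R, hR, ε1, ⟨hε1, hε1R.trans_le (min_le_left _ _)⟩, ?_⟩
  rintro ε ⟨hε, hεε1⟩
  have hεR : ε ≤ R := (hεε1.trans (hε1R.trans_le (min_le_left _ _))).le
  have hL : 2 ≤ Real.log (1 / ε) := by
    have hlogε := (Real.log_lt_iff_lt_exp hε).2 (hεε1.trans (hε1R.trans_le (min_le_right _ _)))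
    rw [one_div, Real.log_inv]
    linarith
  have hR1 : R ≤ 1 := (hRδ1.trans_le (min_le_right _ _)).le
  have hlog : Real.log (R / ε) ≤ Real.log (1 / ε) := Real.log_le_log (by positivity) (by gcongr)
  calc _ ≤ ENNReal.ofReal (2 * C) * Ω * ENNReal.ofReal (1 + n * Real.log (R / ε)) :=
        lintegral_annulus_div_dist_pow_le hQ (by omega) hε hεR fun r hr => by
          rw [← setLIntegral_inter_eq_of_support_subset measurableSet_ball
            (Function.support_subset_iff'.2 hQ_zero), mul_assoc]
          exact hball r ⟨hr.1, hr.2.trans_lt (hRδ1.trans_le (min_le_left _ _))⟩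
    _ = ENNReal.ofReal (2 * C * Ω.toReal * (1 + n * Real.log (R / ε))) := by
        rw [ENNReal.ofReal_mul (p := 2 * C * Ω.toReal) (by positivity),
          ENNReal.ofReal_mul (p := 2 * C) (by positivity),
          ENNReal.ofReal_toReal measure_ball_lt_top.ne]
    _ ≤ _ := by
        refine ENNReal.ofReal_le_ofReal ?_
        calc 2 * C * Ω.toReal * (1 + n * Real.log (R / ε))
            = C * Ω.toReal * (2 * (1 + n * Real.log (R / ε))) := by ring
          _ ≤ C * Ω.toReal * (2 * (1 + n * Real.log (1 / ε))) := by gcongr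
          _ ≤ C * Ω.toReal * (2 ^ n / Real.log 2 * Real.log (1 / ε)) := by
              gcongr C * Ω.toReal * ?_
              exact two_mul_one_add_mul_le hn hL
          _ = _ := by ring

/-- If `D ⊆ ℝⁿ` is a domain, `x₀ ∈ ∂D`, and `Q ≥ 0` (vanishing off `D`) has integral
means over `B(x₀, ε) ∩ D` bounded by `C`, then
`∫_{ε<|x-x₀|<ε₀'} Q(x)/|x-x₀|ⁿ dm(x) ≤ (C Ωₙ 2ⁿ / log 2) · log(1/ε)` for all small `ε`. -/
theorem averages_over_rings_estimate_of_domain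
    (n : ℕ) (hn : 2 ≤ n)
    (D : Set (EuclideanSpace ℝ (Fin n))) (hD_ne : D.Nonempty)
    (hD_open : IsOpen D) (hD_conn : IsConnected D)
    (x0 : EuclideanSpace ℝ (Fin n)) (hx0 : x0 ∈ frontier D)
    (Q : EuclideanSpace ℝ (Fin n) → ℝ≥0∞) (hQ : Measurable Q)
    (hQ_zero : ∀ x ∉ D, Q x = 0)
    (C : ℝ) (hC : 0 < C)
    (hlimsup :
      Filter.limsup
        (fun ε : ℝ =>
          (1 : ℝ≥0∞) /
              (volume (ball (0 : EuclideanSpace ℝ (Fin n)) 1) * ENNReal.ofReal (ε ^ n)) *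
            ∫⁻ x in ball x0 ε ∩ D, Q x)
        (nhdsWithin (0 : ℝ) (Set.Ioi 0)) ≤ ENNReal.ofReal C) :
    ∃ ε0' > (0 : ℝ), ∃ ε1 ∈ Set.Ioo (0 : ℝ) ε0', ∀ ε ∈ Set.Ioo (0 : ℝ) ε1,
      ∫⁻ x in {x : EuclideanSpace ℝ (Fin n) | ε < dist x x0 ∧ dist x x0 < ε0'},
          Q x / ENNReal.ofReal ((dist x x0) ^ n) ≤
        ENNReal.ofReal
          (C * (volume (ball (0 : EuclideanSpace ℝ (Fin n)) 1)).toReal * 2 ^ n /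
              Real.log 2 * Real.log (1 / ε)) :=
  averages_over_rings_estimate_of_domain_general n hn D x0 Q hQ hQ_zero C hC hlimsup
end

section
/- Let n ≥ 2 be an integer, let D ⊆ ℝⁿ be a domain, let x0 ∈ ∂D, and let Q : ℝⁿ → [0,∞] be a Lebesgue measurable function with Q(x) = 0 for x ∉ D, such that for some constant 0 < C < ∞ one has limsup_{ε→0⁺} (1/(Ωₙ·εⁿ)) · ∫_{B(x0,ε)∩D} Q(x) dm(x) ≤ C. Then there exists ε0 ∈ (0, 1] such that for every r ∈ (0, ε0²), (1/(log(ε0/r))ⁿ) · ∫_{{x : r < |x−x0| < ε0}} Q(x)/|x−x0|ⁿ dm(x) ≤ (2·C·Ωₙ·2ⁿ)/(log 2 · (log(ε0/r))^{n−1}). -/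
open MeasureTheory Metric Filter Set
open scoped ENNReal NNReal

/-- Key intermediate modulus estimate: if `D ⊆ ℝⁿ` is a domain, `x₀ ∈ ∂D`, and `Q`
(vanishing off `D`) has integral means over balls `B(x₀, ε) ∩ D` bounded by `C`, then
there exists `ε₀ ∈ (0, 1]` such that for every `r ∈ (0, ε₀²)`,
`(1/log(ε₀/r))ⁿ · ∫_{r<|x-x₀|<ε₀} Q(x)/|x-x₀|ⁿ dm(x)
  ≤ 2 C Ωₙ 2ⁿ / (log 2 · log^{n-1}(ε₀/r))`. -/
theorem modulus_intermediate_estimate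
    (n : ℕ) (hn : 2 ≤ n)
    (D : Set (EuclideanSpace ℝ (Fin n))) (hD_open : IsOpen D) (hD_conn : IsConnected D)
    (x0 : EuclideanSpace ℝ (Fin n)) (hx0 : x0 ∈ frontier D)
    (Q : EuclideanSpace ℝ (Fin n) → ℝ≥0∞) (hQ : Measurable Q)
    (hQ_zero : ∀ x ∉ D, Q x = 0)
    (C : ℝ) (hC : 0 < C)
    (hlimsup :
      Filter.limsup
        (fun ε : ℝ =>
          (1 : ℝ≥0∞) /
              (volume (ball (0 : EuclideanSpace ℝ (Fin n)) 1) * ENNReal.ofReal (ε ^ n)) *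
            ∫⁻ x in ball x0 ε ∩ D, Q x)
        (nhdsWithin (0 : ℝ) (Set.Ioi 0)) ≤ ENNReal.ofReal C) :
    ∃ ε0 : ℝ, ε0 ∈ Set.Ioc (0 : ℝ) 1 ∧ ∀ r : ℝ, r ∈ Set.Ioo (0 : ℝ) (ε0 ^ 2) →
      (ENNReal.ofReal (1 / (Real.log (ε0 / r)) ^ n)) *
          ∫⁻ x in {x : EuclideanSpace ℝ (Fin n) | r < dist x x0 ∧ dist x x0 < ε0},
            Q x / ENNReal.ofReal ((dist x x0) ^ n) ≤
        ENNReal.ofReal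
          (2 * C * (volume (ball (0 : EuclideanSpace ℝ (Fin n)) 1)).toReal * 2 ^ n /
            (Real.log 2 * (Real.log (ε0 / r)) ^ (n - 1))) := by
  classical
  set Ω : ℝ≥0∞ := volume (ball (0 : EuclideanSpace ℝ (Fin n)) 1) with hΩdef
  have hΩ0 : Ω ≠ 0 := (measure_ball_pos volume (0 : EuclideanSpace ℝ (Fin n)) one_pos).ne'
  have hΩtop : Ω ≠ ∞ := measure_ball_lt_top.ne
  have hΩR : 0 ≤ Ω.toReal := ENNReal.toReal_nonneg
  -- Step 1: eventually bound on the averages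
  have hlt : Filter.limsup
      (fun ε : ℝ =>
        (1 : ℝ≥0∞) / (Ω * ENNReal.ofReal (ε ^ n)) * ∫⁻ x in ball x0 ε ∩ D, Q x)
      (nhdsWithin (0 : ℝ) (Set.Ioi 0)) < ENNReal.ofReal (3 * C / 2) :=
    lt_of_le_of_lt hlimsup (by
      rw [ENNReal.ofReal_lt_ofReal_iff (by linarith)]
      linarith)
  have hev := Filter.eventually_lt_of_limsup_lt hlt
  obtain ⟨ε1, hε1, hsub⟩ := Metric.mem_nhdsWithin_iff.mp hev
  have key : ∀ ε : ℝ, 0 < ε → ε ≤ ε1 / 2 →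
      ∫⁻ x in ball x0 ε ∩ D, Q x ≤
        ENNReal.ofReal (3 * C / 2) * (Ω * ENNReal.ofReal (ε ^ n)) := by
    intro ε hε hε'
    have hmem : ε ∈ Metric.ball (0 : ℝ) ε1 ∩ Set.Ioi 0 := by
      constructor
      · simp only [Metric.mem_ball, Real.dist_eq, sub_zero, abs_of_pos hε]
        linarith
      · exact hε
    have hf := hsub hmem
    simp only [Set.mem_setOf_eq] at hf
    set b : ℝ≥0∞ := Ω * ENNReal.ofReal (ε ^ n) with hb
    have hb0 : b ≠ 0 := by
      apply mul_ne_zero hΩ0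
      simp [ENNReal.ofReal_eq_zero, not_le, pow_pos hε n]
    have hbtop : b ≠ ∞ := ENNReal.mul_ne_top hΩtop ENNReal.ofReal_ne_top
    rw [one_div, ← ENNReal.div_eq_inv_mul] at hf
    exact ((ENNReal.div_lt_iff (Or.inl hb0) (Or.inl hbtop)).mp hf).le
  -- choose ε0
  set ε0 : ℝ := min (ε1 / 2) (1 / 8) with hε0def
  have hε0 : 0 < ε0 := lt_min (by linarith) (by norm_num)
  have hε0le : ε0 ≤ 1 / 8 := min_le_right _ _
  have hε0le1 : ε0 ≤ ε1 / 2 := min_le_left _ _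
  refine ⟨ε0, ⟨hε0, by linarith⟩, ?_⟩
  intro r hr
  obtain ⟨hr0, hr2⟩ := hr
  set L : ℝ := Real.log (ε0 / r) with hLdef
  have hlog2 : (0 : ℝ) < Real.log 2 := Real.log_pos (by norm_num)
  have h8 : (8 : ℝ) < ε0 / r := by
    rw [lt_div_iff₀ hr0]
    nlinarith [sq_nonneg ε0]
  have hL8 : 3 * Real.log 2 ≤ L := by
    have h1 : Real.log 8 ≤ L := Real.log_le_log (by norm_num) h8.le
    have h2 : Real.log 8 = 3 * Real.log 2 := by
      rw [show (8 : ℝ) = 2 ^ 3 by norm_num, Real.log_pow]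
      push_cast; ring
    linarith
  have hL0 : 0 < L := by nlinarith
  set N : ℕ := ⌈L / Real.log 2⌉₊ with hNdef
  have hN1 : ε0 / 2 ^ N ≤ r := by
    have h1 : L / Real.log 2 ≤ (N : ℝ) := Nat.le_ceil _
    have h2 : L ≤ (N : ℝ) * Real.log 2 := by
      rw [div_le_iff₀ hlog2] at h1; linarith
    have h3 : ε0 / r ≤ 2 ^ N := by
      have hlog : Real.log (ε0 / r) ≤ Real.log ((2 : ℝ) ^ N) := by
        rw [Real.log_pow]; exact h2
      exact (Real.log_le_log_iff (div_pos hε0 hr0) (by positivity)).mp hlog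
    rw [div_le_iff₀ (by positivity)]
    rw [div_le_iff₀ hr0] at h3
    linarith
  have hN2 : (N : ℝ) ≤ L / Real.log 2 + 1 :=
    (Nat.ceil_lt_add_one (by positivity)).le
  -- the constant for each ring
  set c : ℝ≥0∞ := ENNReal.ofReal (3 * C / 2 * 2 ^ n) * Ω with hcdef
  -- bound on each dyadic ring
  have ring_bound : ∀ k : ℕ,
      ∫⁻ x in {x : EuclideanSpace ℝ (Fin n) |
          ε0 / 2 ^ (k + 1) ≤ dist x x0 ∧ dist x x0 < ε0 / 2 ^ k},
        Q x / ENNReal.ofReal ((dist x x0) ^ n) ≤ c := by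
    intro k
    set s : Set (EuclideanSpace ℝ (Fin n)) :=
      {x | ε0 / 2 ^ (k + 1) ≤ dist x x0 ∧ dist x x0 < ε0 / 2 ^ k} with hsdef
    have hδpos : (0 : ℝ) < ε0 / 2 ^ (k + 1) := by positivity
    have hstep1 : ∫⁻ x in s, Q x / ENNReal.ofReal ((dist x x0) ^ n) ≤
        ∫⁻ x in s, ENNReal.ofReal ((2 ^ (k + 1) / ε0) ^ n) * Q x := by
      apply setLIntegral_mono (hQ.const_mul _)
      intro x hx
      rw [ENNReal.div_eq_inv_mul]
      apply mul_le_mul_left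
      have hd : ε0 / 2 ^ (k + 1) ≤ dist x x0 := hx.1
      have hpow : (ε0 / 2 ^ (k + 1)) ^ n ≤ (dist x x0) ^ n :=
        pow_le_pow_left₀ hδpos.le hd n
      have h1 : (ENNReal.ofReal ((dist x x0) ^ n))⁻¹ ≤
          (ENNReal.ofReal ((ε0 / 2 ^ (k + 1)) ^ n))⁻¹ :=
        ENNReal.inv_le_inv' (ENNReal.ofReal_le_ofReal hpow)
      refine h1.trans ?_
      rw [← ENNReal.ofReal_inv_of_pos (by positivity)]
      apply ENNReal.ofReal_le_ofReal
      rw [← inv_pow]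
      apply pow_le_pow_left₀ (by positivity)
      rw [inv_div]
    have hstep2 : ∫⁻ x in s, ENNReal.ofReal ((2 ^ (k + 1) / ε0) ^ n) * Q x =
        ENNReal.ofReal ((2 ^ (k + 1) / ε0) ^ n) * ∫⁻ x in s, Q x :=
      lintegral_const_mul _ hQ
    have hQind : Q = D.indicator Q := by
      funext x
      by_cases hx : x ∈ D
      · simp [hx]
      · simp [hx, hQ_zero x hx]
    have hstep3 : ∫⁻ x in s, Q x ≤
        ENNReal.ofReal (3 * C / 2) * (Ω * ENNReal.ofReal ((ε0 / 2 ^ k) ^ n)) := by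
      have h1 : ∫⁻ x in s, Q x = ∫⁻ x in D ∩ s, Q x := by
        conv_lhs => rw [hQind]
        exact setLIntegral_indicator hD_open.measurableSet Q
      rw [h1]
      have h2 : D ∩ s ⊆ ball x0 (ε0 / 2 ^ k) ∩ D := by
        rintro x ⟨hxD, hxs⟩
        exact ⟨by simpa [mem_ball, dist_comm] using hxs.2, hxD⟩
      calc ∫⁻ x in D ∩ s, Q x ≤ ∫⁻ x in ball x0 (ε0 / 2 ^ k) ∩ D, Q x :=
            lintegral_mono_set h2
        _ ≤ _ := key (ε0 / 2 ^ k) (by positivity)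
              (by
                have : ε0 / 2 ^ k ≤ ε0 := by
                  apply div_le_self hε0.le
                  exact one_le_pow₀ (by norm_num : (1:ℝ) ≤ 2)
                linarith)
    calc ∫⁻ x in s, Q x / ENNReal.ofReal ((dist x x0) ^ n)
        ≤ ENNReal.ofReal ((2 ^ (k + 1) / ε0) ^ n) * ∫⁻ x in s, Q x := by
          rw [← hstep2]; exact hstep1
      _ ≤ ENNReal.ofReal ((2 ^ (k + 1) / ε0) ^ n) *
            (ENNReal.ofReal (3 * C / 2) * (Ω * ENNReal.ofReal ((ε0 / 2 ^ k) ^ n))) :=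
          mul_le_mul_right hstep3 _
      _ = c := by
          rw [hcdef,
            show ENNReal.ofReal ((2 ^ (k + 1) / ε0) ^ n) *
                (ENNReal.ofReal (3 * C / 2) * (Ω * ENNReal.ofReal ((ε0 / 2 ^ k) ^ n))) =
              ENNReal.ofReal ((2 ^ (k + 1) / ε0) ^ n) * ENNReal.ofReal (3 * C / 2) *
                ENNReal.ofReal ((ε0 / 2 ^ k) ^ n) * Ω from by ring]
          congr 1
          rw [← ENNReal.ofReal_mul (by positivity), ← ENNReal.ofReal_mul (by positivity)]
          congr 1
          have h2 : (2 ^ (k + 1) / ε0) * (ε0 / 2 ^ k) = 2 := by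
            field_simp
            ring
          have hmp : (2 ^ (k + 1) / ε0) ^ n * (ε0 / 2 ^ k) ^ n = 2 ^ n := by
            rw [← mul_pow, h2]
          linear_combination (3 * C / 2) * hmp
  -- tower of annuli
  have tower : ∀ k : ℕ,
      ∫⁻ x in {x : EuclideanSpace ℝ (Fin n) |
          ε0 / 2 ^ k ≤ dist x x0 ∧ dist x x0 < ε0},
        Q x / ENNReal.ofReal ((dist x x0) ^ n) ≤ (k : ℝ≥0∞) * c := by
    intro k
    induction k with
    | zero =>
      have : {x : EuclideanSpace ℝ (Fin n) |
          ε0 / 2 ^ 0 ≤ dist x x0 ∧ dist x x0 < ε0} = ∅ := by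
        ext x
        simp only [pow_zero, div_one, Set.mem_setOf_eq, Set.mem_empty_iff_false,
          iff_false, not_and, not_lt]
        intro h; exact h
      rw [this]
      simp
    | succ k ih =>
      have hsub2 : {x : EuclideanSpace ℝ (Fin n) |
          ε0 / 2 ^ (k + 1) ≤ dist x x0 ∧ dist x x0 < ε0} ⊆
          {x | ε0 / 2 ^ k ≤ dist x x0 ∧ dist x x0 < ε0} ∪
          {x | ε0 / 2 ^ (k + 1) ≤ dist x x0 ∧ dist x x0 < ε0 / 2 ^ k} := by
        rintro x ⟨h1, h2⟩
        by_cases hx : ε0 / 2 ^ k ≤ dist x x0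
        · exact Or.inl ⟨hx, h2⟩
        · exact Or.inr ⟨h1, not_le.mp hx⟩
      calc ∫⁻ x in {x : EuclideanSpace ℝ (Fin n) |
              ε0 / 2 ^ (k + 1) ≤ dist x x0 ∧ dist x x0 < ε0},
            Q x / ENNReal.ofReal ((dist x x0) ^ n)
          ≤ ∫⁻ x in ({x : EuclideanSpace ℝ (Fin n) |
              ε0 / 2 ^ k ≤ dist x x0 ∧ dist x x0 < ε0} ∪
              {x | ε0 / 2 ^ (k + 1) ≤ dist x x0 ∧ dist x x0 < ε0 / 2 ^ k}),
            Q x / ENNReal.ofReal ((dist x x0) ^ n) := lintegral_mono_set hsub2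
        _ ≤ _ + _ := lintegral_union_le _ _ _
        _ ≤ (k : ℝ≥0∞) * c + c := add_le_add ih (ring_bound k)
        _ = ((k + 1 : ℕ) : ℝ≥0∞) * c := by
            push_cast
            ring
  -- main set is inside the N-th tower set
  have hmain : ∫⁻ x in {x : EuclideanSpace ℝ (Fin n) |
        r < dist x x0 ∧ dist x x0 < ε0},
      Q x / ENNReal.ofReal ((dist x x0) ^ n) ≤ (N : ℝ≥0∞) * c := by
    refine le_trans (lintegral_mono_set ?_) (tower N)
    rintro x ⟨h1, h2⟩
    exact ⟨le_of_lt (lt_of_le_of_lt hN1 h1), h2⟩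
  -- final arithmetic
  have hconst : (N : ℝ≥0∞) * c = ENNReal.ofReal ((N : ℝ) * (3 * C / 2 * 2 ^ n) * Ω.toReal) := by
    conv_rhs => rw [ENNReal.ofReal_mul (by positivity), ENNReal.ofReal_mul (by positivity),
      ENNReal.ofReal_natCast, ENNReal.ofReal_toReal hΩtop]
    rw [hcdef]
    ring
  calc (ENNReal.ofReal (1 / L ^ n)) *
        ∫⁻ x in {x : EuclideanSpace ℝ (Fin n) | r < dist x x0 ∧ dist x x0 < ε0},
          Q x / ENNReal.ofReal ((dist x x0) ^ n)
      ≤ ENNReal.ofReal (1 / L ^ n) *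
          ENNReal.ofReal ((N : ℝ) * (3 * C / 2 * 2 ^ n) * Ω.toReal) := by
        rw [← hconst]; exact mul_le_mul_right hmain _
    _ = ENNReal.ofReal (1 / L ^ n * ((N : ℝ) * (3 * C / 2 * 2 ^ n) * Ω.toReal)) := by
        rw [← ENNReal.ofReal_mul (by positivity)]
    _ ≤ ENNReal.ofReal (2 * C * Ω.toReal * 2 ^ n / (Real.log 2 * L ^ (n - 1))) := by
        apply ENNReal.ofReal_le_ofReal
        have h3 : (3 : ℝ) ≤ L / Real.log 2 := by
          rw [le_div_iff₀ hlog2]; linarith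
        have hN3 : (N : ℝ) ≤ 4 / 3 * (L / Real.log 2) := by
          have := hN2
          nlinarith
        have hLn : L ^ n = L ^ (n - 1) * L := by
          rw [← pow_succ]
          congr 1
          omega
        have hstep : 1 / L ^ n * ((N : ℝ) * (3 * C / 2 * 2 ^ n) * Ω.toReal) ≤
            1 / L ^ n * ((4 / 3 * (L / Real.log 2)) * (3 * C / 2 * 2 ^ n) * Ω.toReal) := by
          gcongr
        refine hstep.trans (le_of_eq ?_)
        rw [hLn]
        have hLm : (0 : ℝ) < L ^ (n - 1) := by positivity
        field_simp
        ring
end
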